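/- The abelianization of a finitely generated relatively simple group is a cyclic group of prime power order (possibly trivial). -/

import Mathlib

/-!
Every proper subgroup of the abelianization `A` pulls back to a proper normal subgroup of `G`,
hence lies in the image of the distinguished subgroup `N`. So, unless `A` is trivial, `A` has a
proper subgroup `K` containing all proper subgroups. Any `a ∉ K` then generates `A`. If two
distinct primes `p, q` divided the order of `a` (every prime does when that order is infinite,
i.e. `0`), then `a ^ p` and `a ^ q` would generate proper subgroups, so both would lie in `K`,
and by Bézout so would `a`.
-/

open Subgroup

def IsRelativelySimpleGroup (G : Type*) [Group G] : Prop :=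
  ∃ N : Subgroup G, N.Normal ∧ N ≠ ⊤ ∧ ∀ M : Subgroup G, M.Normal → M ≠ ⊤ → M ≤ N

theorem IsRelativelySimpleGroup.of_surjective {G H : Type*} [Group G] [Group H] [Nontrivial H]
    {f : G →* H} (hf : Function.Surjective f) (hG : IsRelativelySimpleGroup G) :
    IsRelativelySimpleGroup H := by
  obtain ⟨N, hN, hNtop, hNmax⟩ := hG
  have hker : f.ker ≤ N := hNmax _ inferInstance fun h => by
    obtain ⟨x, hx⟩ := exists_ne (1 : H)
    obtain ⟨g, rfl⟩ := hf x
    exact hx (f.mem_ker.mp (h ▸ mem_top g))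
  refine ⟨N.map f, hN.map f hf, fun h => hNtop ?_, fun M hM hMtop => ?_⟩
  · rw [← comap_map_eq_self hker, h, comap_top]
  · have hcomap : M.comap f ≠ ⊤ := fun h => hMtop <| by
      rw [← map_comap_eq_self_of_surjective hf M, h, map_top_of_surjective f hf]
    rw [← map_comap_eq_self_of_surjective hf M]
    exact map_mono (hNmax _ (hM.comap f) hcomap)

theorem Subgroup.mem_of_pow_mem_of_coprime {G : Type*} [Group G] (K : Subgroup G) {x : G}
    {m n : ℕ} (hmn : m.Coprime n) (hm : x ^ m ∈ K) (hn : x ^ n ∈ K) : x ∈ K := by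
  have hx : x = (x ^ m) ^ m.gcdA n * (x ^ n) ^ m.gcdB n := by
    rw [← zpow_natCast, ← zpow_natCast, ← zpow_mul, ← zpow_mul, ← zpow_add,
      ← Nat.gcd_eq_gcd_ab, hmn, Nat.cast_one, zpow_one]
  rw [hx]
  exact mul_mem (zpow_mem hm _) (zpow_mem hn _)

theorem isCyclic_and_isPrimePow_card_of_forall_le {A : Type*} [Group A] {K : Subgroup A}
    (hK : K ≠ ⊤) (hmax : ∀ H : Subgroup A, H ≠ ⊤ → H ≤ K) :
    IsCyclic A ∧ IsPrimePow (Nat.card A) := by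
  obtain ⟨a, -, haK⟩ := SetLike.exists_of_lt (lt_top_iff_ne_top.mpr hK)
  have hgen (x : A) (hx : zpowers x ≠ ⊤) : x ∈ K := hmax _ hx (mem_zpowers x)
  have ha : zpowers a = ⊤ := by_contra fun h => haK (hgen a h)
  have hcard : Nat.card A = orderOf a := by
    rw [← Nat.card_zpowers, ha, card_top]
  have hpow {p : ℕ} (hp : p.Prime) (hpa : p ∣ orderOf a) : a ^ p ∈ K := by
    refine hgen _ fun h => hp.one_lt.ne' ?_
    rw [← Nat.gcd_eq_left hpa, ← mem_zpowers_pow_iff, h]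
    exact mem_top a
  refine ⟨⟨a, (eq_top_iff' _).mp ha⟩, ?_⟩
  rw [hcard, isPrimePow_iff_unique_prime_dvd]
  obtain ⟨p, hp, hpa⟩ := Nat.exists_prime_and_dvd (n := orderOf a) fun h => haK <| by
    rw [orderOf_eq_one_iff.mp h]
    exact one_mem K
  refine ⟨p, ⟨hp, hpa⟩, fun q ⟨hq, hqa⟩ => by_contra fun hqp => haK ?_⟩
  exact K.mem_of_pow_mem_of_coprime ((Nat.coprime_primes hq hp).mpr hqp) (hpow hq hqa) (hpow hp hpa)

theorem IsRelativelySimpleGroup.isCyclic_and_isPrimePow_card {A : Type*} [CommGroup A]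
    (hA : IsRelativelySimpleGroup A) : IsCyclic A ∧ IsPrimePow (Nat.card A) := by
  obtain ⟨K, -, hK, hmax⟩ := hA
  exact isCyclic_and_isPrimePow_card_of_forall_le hK fun H => hmax H inferInstance

theorem stmt6_general {G : Type*} [Group G]
    (hrel : ∃ N : Subgroup G, N.Normal ∧ N ≠ ⊤ ∧
        ∀ M : Subgroup G, M.Normal → M ≠ ⊤ → M ≤ N) :
    IsCyclic (Abelianization G) ∧
      ∃ p k : ℕ, p.Prime ∧ Nat.card (Abelianization G) = p ^ k := by
  rcases subsingleton_or_nontrivial (Abelianization G) with hA | hA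
  · exact ⟨isCyclic_of_subsingleton, 2, 0, Nat.prime_two, by simp [Nat.card_unique]⟩
  have hsurj : Function.Surjective (Abelianization.of : G →* Abelianization G) :=
    Quot.mk_surjective
  obtain ⟨hcyc, hpow⟩ :=
    (IsRelativelySimpleGroup.of_surjective hsurj hrel).isCyclic_and_isPrimePow_card
  obtain ⟨p, k, hp, -, hpk⟩ := (isPrimePow_nat_iff _).mp hpow
  exact ⟨hcyc, p, k, hp, hpk.symm⟩

/-- The abelianization of a finitely generated relatively simple group is cyclic of
prime power order (possibly trivial, i.e. of order `p ^ 0`). -/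
theorem stmt6 {G : Type*} [Group G] (hfg : Group.FG G)
    (hrel : ∃ N : Subgroup G, N.Normal ∧ N ≠ ⊤ ∧
        ∀ M : Subgroup G, M.Normal → M ≠ ⊤ → M ≤ N) :
    IsCyclic (Abelianization G) ∧
      ∃ p k : ℕ, p.Prime ∧ Nat.card (Abelianization G) = p ^ k :=
  stmt6_general hrel
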